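/- arXiv:1901.01720 — 4 statements merged into one kernel-verified Lean document; each statement's English description precedes it below -/
import Mathlib

section
/- Let F be ℝ or ℂ and let m, n be positive integers. Let P ∈ M_{mn}(F) and let φ : M_{mn}(F) → M_{mn}(F) be the map φ(M) = PM. Then tr(φ(A ⊕ B)) = tr(A ⊕ B) for all A ∈ M_m(F) and B ∈ M_n(F) if and only if tr₁(P) = m·I_n and tr₂(P) = n·I_m (equivalently, tr₁(P) = tr₁(I_{mn}) and tr₂(P) = tr₂(I_{mn})). -/
open Matrix Kronecker BigOperators

/-- The Kronecker sum `A ⊕ B = A ⊗ Iₙ + Iₘ ⊗ B`. -/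
def kronSum {F : Type*} [CommRing F] {m n : ℕ}
    (A : Matrix (Fin m) (Fin m) F) (B : Matrix (Fin n) (Fin n) F) :
    Matrix (Fin m × Fin n) (Fin m × Fin n) F :=
  A ⊗ₖ (1 : Matrix (Fin n) (Fin n) F) + (1 : Matrix (Fin m) (Fin m) F) ⊗ₖ B

/-- The first partial trace `tr₁(P) = Σⱼ Pⱼⱼ` (sum of the diagonal blocks). -/
def ptrace1 {F : Type*} [AddCommMonoid F] {m n : ℕ}
    (P : Matrix (Fin m × Fin n) (Fin m × Fin n) F) :
    Matrix (Fin n) (Fin n) F :=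
  Matrix.of fun a b => ∑ k : Fin m, P (k, a) (k, b)

/-- The second partial trace `tr₂(P) = Σ_{k,l} tr(P_{kl}) E_{kl}` (blockwise trace). -/
def ptrace2 {F : Type*} [AddCommMonoid F] {m n : ℕ}
    (P : Matrix (Fin m × Fin n) (Fin m × Fin n) F) :
    Matrix (Fin m) (Fin m) F :=
  Matrix.of fun k l => ∑ a : Fin n, P (k, a) (l, a)

private lemma sum3rot {M : Type*} [AddCommMonoid M] {α β γ : Type*}
    [Fintype α] [Fintype β] [Fintype γ] (f : α → β → γ → M) :
    ∑ a, ∑ b, ∑ c, f a b c = ∑ b : β, ∑ c : γ, ∑ a : α, f a b c := by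
  rw [Finset.sum_comm]
  exact Finset.sum_congr rfl fun _ _ => Finset.sum_comm

private lemma tr_right {F : Type*} [CommRing F] {m n : ℕ}
    (P : Matrix (Fin m × Fin n) (Fin m × Fin n) F) (A : Matrix (Fin m) (Fin m) F) :
    (P * (A ⊗ₖ (1 : Matrix (Fin n) (Fin n) F))).trace = (ptrace2 P * A).trace := by
  simp only [Matrix.trace, Matrix.diag, Matrix.mul_apply, ptrace2, Matrix.of_apply,
    kroneckerMap_apply, Matrix.one_apply, Fintype.sum_prod_type, mul_ite, mul_one, mul_zero,
    Finset.sum_ite_eq, Finset.sum_ite_eq', Finset.mem_univ, if_true, Finset.sum_mul]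
  refine Finset.sum_congr rfl fun a _ => ?_
  exact Finset.sum_comm

private lemma tr_left {F : Type*} [CommRing F] {m n : ℕ}
    (P : Matrix (Fin m × Fin n) (Fin m × Fin n) F) (B : Matrix (Fin n) (Fin n) F) :
    (P * ((1 : Matrix (Fin m) (Fin m) F) ⊗ₖ B)).trace = (ptrace1 P * B).trace := by
  simp only [Matrix.trace, Matrix.diag, Matrix.mul_apply, ptrace1, Matrix.of_apply,
    kroneckerMap_apply, Matrix.one_apply, Fintype.sum_prod_type, ite_mul, one_mul, zero_mul,
    mul_ite, mul_zero, Finset.sum_mul]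
  conv_lhs => enter [2, x, 2, x1]; rw [Finset.sum_comm]
  simp only [Finset.sum_ite_eq', Finset.mem_univ, if_true]
  exact sum3rot fun a b c => P (a, b) (a, c) * B c b

private lemma nondeg {F : Type*} [CommRing F] {m : ℕ} (X : Matrix (Fin m) (Fin m) F)
    (h : ∀ A : Matrix (Fin m) (Fin m) F, (X * A).trace = 0) : X = 0 := by
  ext i j
  have := h (Matrix.single j i 1)
  simpa [Matrix.trace, Matrix.diag, Matrix.mul_apply, Matrix.single, ite_and,
    Finset.sum_ite_eq, Finset.sum_ite_eq'] using this

/-- Theorem 3.1: for `φ(M) = P·M`, `φ` preserves the trace of all Kronecker sums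
iff `tr₁(P) = m·Iₙ` and `tr₂(P) = n·Iₘ` (i.e. the partial traces of the identity). -/
theorem trace_kronSum_preserved_mul_left_iff
    {F : Type*} [RCLike F] {m n : ℕ} (hm : 0 < m) (hn : 0 < n)
    (P : Matrix (Fin m × Fin n) (Fin m × Fin n) F) :
    (∀ (A : Matrix (Fin m) (Fin m) F) (B : Matrix (Fin n) (Fin n) F),
        (P * kronSum A B).trace = (kronSum A B).trace) ↔
      (ptrace1 P = (m : F) • (1 : Matrix (Fin n) (Fin n) F) ∧
       ptrace2 P = (n : F) • (1 : Matrix (Fin m) (Fin m) F)) := by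
  have hk : ∀ (A : Matrix (Fin m) (Fin m) F) (B : Matrix (Fin n) (Fin n) F),
      (kronSum A B).trace = (n : F) * A.trace + (m : F) * B.trace := by
    intro A B
    simp [kronSum, trace_kronecker, Matrix.trace_one]
    ring
  constructor
  · intro h
    constructor
    · -- ptrace1
      have key : ∀ B : Matrix (Fin n) (Fin n) F,
          ((ptrace1 P - (m : F) • 1) * B).trace = 0 := by
        intro B
        have h0 := h 0 B
        rw [hk] at h0
        simp only [kronSum, Matrix.zero_kronecker, zero_add, Matrix.trace_zero, mul_zero] at h0
        rw [tr_left] at h0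
        rw [Matrix.sub_mul, Matrix.trace_sub, h0, Matrix.smul_mul, Matrix.one_mul,
          Matrix.trace_smul, smul_eq_mul, sub_self]
      have := nondeg _ key
      linear_combination (norm := abel) this
    · have key : ∀ A : Matrix (Fin m) (Fin m) F,
          ((ptrace2 P - (n : F) • 1) * A).trace = 0 := by
        intro A
        have h0 := h A 0
        rw [hk] at h0
        simp only [kronSum, Matrix.kronecker_zero, add_zero, Matrix.trace_zero, mul_zero] at h0
        rw [tr_right] at h0
        rw [Matrix.sub_mul, Matrix.trace_sub, h0, Matrix.smul_mul, Matrix.one_mul,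
          Matrix.trace_smul, smul_eq_mul, sub_self]
      have := nondeg _ key
      linear_combination (norm := abel) this
  · rintro ⟨h1, h2⟩ A B
    rw [hk]
    simp only [kronSum, Matrix.mul_add, Matrix.trace_add, tr_right, tr_left, h1, h2,
      Matrix.smul_mul, Matrix.one_mul, Matrix.trace_smul, smul_eq_mul]
    try ring
end

section
/- Let F be ℝ or ℂ and let m, n be positive integers. Let P = I_{mn} + Σ_{j=1}^r A_j ⊗ B_j with A_j ∈ M_m(F), B_j ∈ M_n(F), where {A_1,…,A_r} is linearly independent and {B_1,…,B_r} is linearly independent (as holds when r is the tensor rank of P − I_{mn} over M_m ⊗ M_n). Let φ : M_{mn}(F) → M_{mn}(F) be φ(M) = PM. Then tr(φ(A ⊕ B)) = tr(A ⊕ B) for all A ∈ M_m(F) and B ∈ M_n(F) if and only if tr(A_j) = 0 and tr(B_j) = 0 for all j = 1,…,r. -/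
open Matrix Kronecker BigOperators

/-! The identity `tr((A ⊗ B)(X ⊕ Y)) = tr(AX) tr B + tr A tr(BY)` turns the preservation
condition into `Σⱼ (tr(Aⱼ X) tr Bⱼ + tr Aⱼ tr(Bⱼ Y)) = 0` for all `X`, `Y`. Taking `Y = 0`
gives `tr((Σⱼ tr(Bⱼ) Aⱼ) X) = 0` for all `X`, so `Σⱼ tr(Bⱼ) Aⱼ = 0` by nondegeneracy of the
trace form, and linear independence of the `Aⱼ` forces `tr Bⱼ = 0`; symmetrically with
`X = 0`. -/

theorem LinearIndependent.eq_zero_of_forall_sum_mul_trace_mul_eq_zero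
    {ι R : Type*} [Fintype ι] [CommRing R] {n : Type*} [Fintype n]
    {A : ι → Matrix n n R} (hA : LinearIndependent R A) {c : ι → R}
    (h : ∀ X, ∑ j, c j * (A j * X).trace = 0) : c = 0 := by
  have hsum : ∑ j, c j • A j = 0 := by
    refine ext_iff_trace_mul_right.mpr fun X => ?_
    simpa [Finset.sum_mul, trace_sum, smul_mul_assoc] using h X
  exact funext <| Fintype.linearIndependent_iff.mp hA c hsum

theorem trace_kronecker_mul_kronSum {F : Type*} [CommRing F] {m n : ℕ}
    (A X : Matrix (Fin m) (Fin m) F) (B Y : Matrix (Fin n) (Fin n) F) :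
    ((A ⊗ₖ B) * kronSum X Y).trace = (A * X).trace * B.trace + A.trace * (B * Y).trace := by
  simp only [kronSum, Matrix.mul_add, ← mul_kronecker_mul, Matrix.mul_one, trace_add,
    trace_kronecker]

theorem trace_one_add_sum_kronecker_mul_kronSum {F : Type*} [CommRing F] {m n r : ℕ}
    (A : Fin r → Matrix (Fin m) (Fin m) F) (B : Fin r → Matrix (Fin n) (Fin n) F)
    (X : Matrix (Fin m) (Fin m) F) (Y : Matrix (Fin n) (Fin n) F) :
    ((1 + ∑ j, A j ⊗ₖ B j) * kronSum X Y).trace = (kronSum X Y).trace +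
      ∑ j, ((A j * X).trace * (B j).trace + (A j).trace * (B j * Y).trace) := by
  simp only [Matrix.add_mul, Matrix.one_mul, Finset.sum_mul, trace_add, trace_sum,
    trace_kronecker_mul_kronSum]

theorem trace_kronSum_preserved_mul_left_iff_traceless_general
    {F : Type*} [RCLike F] {m n r : ℕ}
    (A : Fin r → Matrix (Fin m) (Fin m) F) (B : Fin r → Matrix (Fin n) (Fin n) F)
    (hA : LinearIndependent F A) (hB : LinearIndependent F B)
    (P : Matrix (Fin m × Fin n) (Fin m × Fin n) F)
    (hP : P = 1 + ∑ j : Fin r, A j ⊗ₖ B j) :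
    (∀ (X : Matrix (Fin m) (Fin m) F) (Y : Matrix (Fin n) (Fin n) F),
        (P * kronSum X Y).trace = (kronSum X Y).trace) ↔
      (∀ j : Fin r, (A j).trace = 0 ∧ (B j).trace = 0) := by
  subst hP
  simp only [trace_one_add_sum_kronecker_mul_kronSum, add_eq_left]
  constructor
  · intro h
    have hBtr : (fun j => (B j).trace) = 0 :=
      hA.eq_zero_of_forall_sum_mul_trace_mul_eq_zero fun X => by simpa [mul_comm] using h X 0
    have hAtr : (fun j => (A j).trace) = 0 :=
      hB.eq_zero_of_forall_sum_mul_trace_mul_eq_zero fun Y => by simpa using h 0 Y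
    exact fun j => ⟨congrFun hAtr j, congrFun hBtr j⟩
  · intro h X Y
    simp [h]

/-- Corollary 3.2: for `P = I + Σⱼ Aⱼ ⊗ Bⱼ` with the `Aⱼ` and the `Bⱼ` linearly
independent families, `φ(M) = P·M` preserves the trace of all Kronecker sums
iff every `Aⱼ` and every `Bⱼ` is traceless. -/
theorem trace_kronSum_preserved_mul_left_iff_traceless
    {F : Type*} [RCLike F] {m n r : ℕ} (hm : 0 < m) (hn : 0 < n)
    (A : Fin r → Matrix (Fin m) (Fin m) F) (B : Fin r → Matrix (Fin n) (Fin n) F)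
    (hA : LinearIndependent F A) (hB : LinearIndependent F B)
    (P : Matrix (Fin m × Fin n) (Fin m × Fin n) F)
    (hP : P = 1 + ∑ j : Fin r, A j ⊗ₖ B j) :
    (∀ (X : Matrix (Fin m) (Fin m) F) (Y : Matrix (Fin n) (Fin n) F),
        (P * kronSum X Y).trace = (kronSum X Y).trace) ↔
      (∀ j : Fin r, (A j).trace = 0 ∧ (B j).trace = 0) :=
  trace_kronSum_preserved_mul_left_iff_traceless_general A B hA hB P hP
end

section
/- Let F be ℝ or ℂ and let m, n be positive integers. Let φ : M_{mn}(F) → M_{mn}(F) be the linear map φ(M) = M + Σ_{j=1}^r (A_j ⊗ C_j) M (B_j ⊗ D_j), where A_j, B_j ∈ M_m(F) and C_j, D_j ∈ M_n(F). Then tr(φ(A ⊕ B)) = tr(A ⊕ B) for all A ∈ M_m(F) and B ∈ M_n(F) if and only if tr₁(φ(I_{mn}) − I_{mn}) = Σ_{j=1}^r tr(A_jB_j)·[C_j, D_j] and tr₂(φ(I_{mn}) − I_{mn}) = Σ_{j=1}^r tr(C_jD_j)·[A_j, B_j], where [X,Y] = XY − YX is the commutator. -/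
open Matrix Kronecker BigOperators

section Aux

variable {F : Type*} [RCLike F] {m n : ℕ}

lemma ptrace1_sum {r : ℕ} (f : Fin r → Matrix (Fin m × Fin n) (Fin m × Fin n) F) :
    ptrace1 (∑ j : Fin r, f j) = ∑ j : Fin r, ptrace1 (f j) := by
  ext a b
  simp only [ptrace1, Matrix.of_apply, Matrix.sum_apply]
  rw [Finset.sum_comm]

lemma ptrace2_sum {r : ℕ} (f : Fin r → Matrix (Fin m × Fin n) (Fin m × Fin n) F) :
    ptrace2 (∑ j : Fin r, f j) = ∑ j : Fin r, ptrace2 (f j) := by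
  ext a b
  simp only [ptrace2, Matrix.of_apply, Matrix.sum_apply]
  rw [Finset.sum_comm]

lemma ptrace1_kron (X : Matrix (Fin m) (Fin m) F) (Y : Matrix (Fin n) (Fin n) F) :
    ptrace1 (X ⊗ₖ Y) = X.trace • Y := by
  ext a b
  simp only [ptrace1, Matrix.of_apply, Matrix.kroneckerMap_apply, Matrix.smul_apply,
    Matrix.trace, Matrix.diag, smul_eq_mul]
  rw [← Finset.sum_mul, mul_comm]

lemma ptrace2_kron (X : Matrix (Fin m) (Fin m) F) (Y : Matrix (Fin n) (Fin n) F) :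
    ptrace2 (X ⊗ₖ Y) = Y.trace • X := by
  ext a b
  simp only [ptrace2, Matrix.of_apply, Matrix.kroneckerMap_apply, Matrix.smul_apply,
    Matrix.trace, Matrix.diag, smul_eq_mul]
  rw [← Finset.mul_sum, mul_comm]

lemma trace_pair_zero {k : ℕ} (M : Matrix (Fin k) (Fin k) F)
    (h : ∀ X : Matrix (Fin k) (Fin k) F, (X * M).trace = 0) : M = 0 := by
  ext i j
  have := h (Matrix.single j i (1:F))
  simpa [Matrix.trace, Matrix.mul_apply, Matrix.single, Matrix.diag,
    Finset.sum_ite_eq, ite_and] using this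

end Aux

/-- Lemma 3.3: for `φ(M) = M + Σⱼ (Aⱼ ⊗ Cⱼ) M (Bⱼ ⊗ Dⱼ)`, the map `φ` preserves the
trace of all Kronecker sums iff
`tr₁(φ(I) − I) = Σⱼ tr(AⱼBⱼ)·[Cⱼ,Dⱼ]` and `tr₂(φ(I) − I) = Σⱼ tr(CⱼDⱼ)·[Aⱼ,Bⱼ]`,
where `[X,Y] = XY − YX`. -/
theorem trace_kronSum_preserved_iff_commutator
    {F : Type*} [RCLike F] {m n r : ℕ} (hm : 0 < m) (hn : 0 < n)
    (A B : Fin r → Matrix (Fin m) (Fin m) F)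
    (C D : Fin r → Matrix (Fin n) (Fin n) F)
    (φ : Matrix (Fin m × Fin n) (Fin m × Fin n) F →
         Matrix (Fin m × Fin n) (Fin m × Fin n) F)
    (hφ : ∀ M, φ M = M + ∑ j : Fin r, (A j ⊗ₖ C j) * M * (B j ⊗ₖ D j)) :
    (∀ (X : Matrix (Fin m) (Fin m) F) (Y : Matrix (Fin n) (Fin n) F),
        (φ (kronSum X Y)).trace = (kronSum X Y).trace) ↔
      (ptrace1 (φ 1 - 1) = ∑ j : Fin r, (A j * B j).trace • (C j * D j - D j * C j) ∧
       ptrace2 (φ 1 - 1) = ∑ j : Fin r, (C j * D j).trace • (A j * B j - B j * A j)) := by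
  set S1 : Matrix (Fin m) (Fin m) F := ∑ j : Fin r, (C j * D j).trace • (B j * A j) with hS1def
  set S2 : Matrix (Fin n) (Fin n) F := ∑ j : Fin r, (A j * B j).trace • (D j * C j) with hS2def
  -- trace of X * S1
  have hS1 : ∀ X : Matrix (Fin m) (Fin m) F,
      (X * S1).trace = ∑ j : Fin r, (A j * X * B j).trace * (C j * D j).trace := by
    intro X
    rw [hS1def, Finset.mul_sum, Matrix.trace_sum]
    refine Finset.sum_congr rfl fun j _ => ?_
    rw [mul_smul_comm, Matrix.trace_smul, smul_eq_mul, mul_comm]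
    congr 1
    rw [Matrix.trace_mul_comm]
    exact (Matrix.trace_mul_cycle (A j) X (B j)).symm
  have hS2 : ∀ Y : Matrix (Fin n) (Fin n) F,
      (Y * S2).trace = ∑ j : Fin r, (A j * B j).trace * (C j * Y * D j).trace := by
    intro Y
    rw [hS2def, Finset.mul_sum, Matrix.trace_sum]
    refine Finset.sum_congr rfl fun j _ => ?_
    rw [mul_smul_comm, Matrix.trace_smul, smul_eq_mul]
    congr 1
    rw [Matrix.trace_mul_comm]
    exact (Matrix.trace_mul_cycle (C j) Y (D j)).symm
  -- key trace identity
  have key : ∀ (X : Matrix (Fin m) (Fin m) F) (Y : Matrix (Fin n) (Fin n) F),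
      (φ (kronSum X Y)).trace = (kronSum X Y).trace + ((X * S1).trace + (Y * S2).trace) := by
    intro X Y
    rw [hφ, Matrix.trace_add, hS1, hS2, ← Finset.sum_add_distrib, Matrix.trace_sum]
    congr 1
    refine Finset.sum_congr rfl fun j _ => ?_
    have : (A j ⊗ₖ C j) * kronSum X Y * (B j ⊗ₖ D j)
        = (A j * X * B j) ⊗ₖ (C j * D j) + (A j * B j) ⊗ₖ (C j * Y * D j) := by
      simp only [kronSum, mul_add, add_mul, ← Matrix.mul_kronecker_mul, mul_one, one_mul]
    rw [this, Matrix.trace_add, trace_kronecker, trace_kronecker]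
  -- φ 1 - 1
  have hφ1 : φ 1 - 1 = ∑ j : Fin r, (A j * B j) ⊗ₖ (C j * D j) := by
    rw [hφ]
    simp only [add_sub_cancel_left, mul_one]
    exact Finset.sum_congr rfl fun j _ => (Matrix.mul_kronecker_mul _ _ _ _).symm
  have hp1 : ptrace1 (φ 1 - 1) = ∑ j : Fin r, (A j * B j).trace • (C j * D j) := by
    rw [hφ1, ptrace1_sum]
    exact Finset.sum_congr rfl fun j _ => ptrace1_kron _ _
  have hp2 : ptrace2 (φ 1 - 1) = ∑ j : Fin r, (C j * D j).trace • (A j * B j) := by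
    rw [hφ1, ptrace2_sum]
    exact Finset.sum_congr rfl fun j _ => ptrace2_kron _ _
  have hc1 : (ptrace1 (φ 1 - 1) = ∑ j : Fin r, (A j * B j).trace • (C j * D j - D j * C j))
      ↔ S2 = 0 := by
    rw [hp1, hS2def]
    constructor
    · intro h
      have := h.symm
      rw [show (∑ j : Fin r, (A j * B j).trace • (C j * D j - D j * C j))
          = (∑ j : Fin r, (A j * B j).trace • (C j * D j)) - ∑ j : Fin r, (A j * B j).trace • (D j * C j) by
        rw [← Finset.sum_sub_distrib]; exact Finset.sum_congr rfl fun j _ => smul_sub _ _ _] at this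
      rwa [sub_eq_self] at this
    · intro h
      rw [show (∑ j : Fin r, (A j * B j).trace • (C j * D j - D j * C j))
          = (∑ j : Fin r, (A j * B j).trace • (C j * D j)) - ∑ j : Fin r, (A j * B j).trace • (D j * C j) by
        rw [← Finset.sum_sub_distrib]; exact Finset.sum_congr rfl fun j _ => smul_sub _ _ _]
      rw [h, sub_zero]
  have hc2 : (ptrace2 (φ 1 - 1) = ∑ j : Fin r, (C j * D j).trace • (A j * B j - B j * A j))
      ↔ S1 = 0 := by
    rw [hp2, hS1def]
    constructor
    · intro h
      have := h.symm
      rw [show (∑ j : Fin r, (C j * D j).trace • (A j * B j - B j * A j))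
          = (∑ j : Fin r, (C j * D j).trace • (A j * B j)) - ∑ j : Fin r, (C j * D j).trace • (B j * A j) by
        rw [← Finset.sum_sub_distrib]; exact Finset.sum_congr rfl fun j _ => smul_sub _ _ _] at this
      rwa [sub_eq_self] at this
    · intro h
      rw [show (∑ j : Fin r, (C j * D j).trace • (A j * B j - B j * A j))
          = (∑ j : Fin r, (C j * D j).trace • (A j * B j)) - ∑ j : Fin r, (C j * D j).trace • (B j * A j) by
        rw [← Finset.sum_sub_distrib]; exact Finset.sum_congr rfl fun j _ => smul_sub _ _ _]
      rw [h, sub_zero]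
  rw [hc1, hc2]
  constructor
  · intro h
    have hz : ∀ X Y, (X * S1).trace + (Y * S2).trace = 0 := by
      intro X Y
      have := key X Y
      rw [h X Y] at this
      exact (left_eq_add.mp this)
    constructor
    · exact trace_pair_zero S2 fun Y => by
        have := hz 0 Y; simpa using this
    · exact trace_pair_zero S1 fun X => by
        have := hz X 0; simpa using this
  · rintro ⟨h2, h1⟩
    intro X Y
    rw [key, h1, h2]
    simp
end

section
/- Let F be ℝ or ℂ and let m, n be positive integers. Let φ : M_{mn}(F) → M_{mn}(F) be a linear map and let φ' be its RT-transform. Then tr(φ(A ⊕ B)) = tr(A ⊕ B) for all A ∈ M_m(F) and B ∈ M_n(F) if and only if tr₁(φ'(I_{mn})) = tr₁(I_{mn}) = m·I_n and tr₂(φ'(I_{mn})) = tr₂(I_{mn}) = n·I_m. -/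
open Matrix Kronecker BigOperators

lemma trace_mul_kron_right {F : Type*} [CommRing F] {m n : ℕ}
    (P : Matrix (Fin m × Fin n) (Fin m × Fin n) F) (X : Matrix (Fin m) (Fin m) F) :
    (P * (X ⊗ₖ (1 : Matrix (Fin n) (Fin n) F))).trace = (ptrace2 P * X).trace := by
  simp [Matrix.trace, Matrix.mul_apply, ptrace2, Fintype.sum_prod_type,
    Matrix.one_apply, mul_ite, Finset.sum_mul, Finset.mul_sum]
  exact Finset.sum_congr rfl fun k _ => Finset.sum_comm ..

lemma trace_mul_kron_left {F : Type*} [CommRing F] {m n : ℕ}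
    (P : Matrix (Fin m × Fin n) (Fin m × Fin n) F) (Y : Matrix (Fin n) (Fin n) F) :
    (P * ((1 : Matrix (Fin m) (Fin m) F) ⊗ₖ Y)).trace = (ptrace1 P * Y).trace := by
  simp [Matrix.trace, Matrix.mul_apply, ptrace1, Fintype.sum_prod_type,
    Matrix.one_apply, mul_ite, Finset.sum_mul, Finset.mul_sum]
  rw [Finset.sum_comm]
  exact Finset.sum_congr rfl fun a _ => Finset.sum_comm ..

lemma trace_mul_kronSum {F : Type*} [CommRing F] {m n : ℕ}
    (P : Matrix (Fin m × Fin n) (Fin m × Fin n) F)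
    (X : Matrix (Fin m) (Fin m) F) (Y : Matrix (Fin n) (Fin n) F) :
    (P * kronSum X Y).trace = (ptrace2 P * X).trace + (ptrace1 P * Y).trace := by
  rw [kronSum, mul_add, Matrix.trace_add, trace_mul_kron_right, trace_mul_kron_left]

lemma ptrace1_one {F : Type*} [CommRing F] {m n : ℕ} :
    ptrace1 (1 : Matrix (Fin m × Fin n) (Fin m × Fin n) F)
      = (m : F) • (1 : Matrix (Fin n) (Fin n) F) := by
  ext a b
  simp [ptrace1, Matrix.one_apply, Prod.ext_iff]

lemma ptrace2_one {F : Type*} [CommRing F] {m n : ℕ} :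
    ptrace2 (1 : Matrix (Fin m × Fin n) (Fin m × Fin n) F)
      = (n : F) • (1 : Matrix (Fin m) (Fin m) F) := by
  ext k l
  simp [ptrace2, Matrix.one_apply, Prod.ext_iff]

lemma eq_of_forall_trace_mul {F : Type*} [CommRing F] {N : Type*} [Fintype N]
    [DecidableEq N] (M M' : Matrix N N F)
    (h : ∀ X : Matrix N N F, (M * X).trace = (M' * X).trace) : M = M' := by
  ext i j
  have := h (Matrix.single j i 1)
  simpa [Matrix.trace, Matrix.mul_apply, Matrix.single, ite_and,
    Finset.sum_ite_eq, Finset.sum_ite_eq'] using this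

/-- Theorem 3.5: a linear map `φ` preserves the trace of all Kronecker sums iff its
RT-transform `φ'` (the adjoint of `φ` with respect to the trace form `(X,Y) ↦ tr(XY)`)
satisfies `tr₁(φ'(I)) = tr₁(I) = m·Iₙ` and `tr₂(φ'(I)) = tr₂(I) = n·Iₘ`. -/
theorem trace_kronSum_preserved_iff_rt_transform
    {F : Type*} [RCLike F] {m n : ℕ} (hm : 0 < m) (hn : 0 < n)
    (φ φ' : Matrix (Fin m × Fin n) (Fin m × Fin n) F →ₗ[F]
            Matrix (Fin m × Fin n) (Fin m × Fin n) F)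
    (hadj : ∀ A B : Matrix (Fin m × Fin n) (Fin m × Fin n) F,
        (φ' B * A).trace = (φ A * B).trace) :
    (∀ (X : Matrix (Fin m) (Fin m) F) (Y : Matrix (Fin n) (Fin n) F),
        (φ (kronSum X Y)).trace = (kronSum X Y).trace) ↔
      (ptrace1 (φ' 1) = (m : F) • (1 : Matrix (Fin n) (Fin n) F) ∧
       ptrace2 (φ' 1) = (n : F) • (1 : Matrix (Fin m) (Fin m) F)) := by
  have htr : ∀ A, (φ A).trace = (φ' 1 * A).trace := fun A => by
    rw [hadj A 1, mul_one]
  have hks : ∀ X Y, (kronSum X Y : Matrix (Fin m × Fin n) (Fin m × Fin n) F).trace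
      = (ptrace2 (1 : Matrix (Fin m × Fin n) (Fin m × Fin n) F) * X).trace
        + (ptrace1 (1 : Matrix (Fin m × Fin n) (Fin m × Fin n) F) * Y).trace := by
    intro X Y
    rw [← trace_mul_kronSum, one_mul]
  constructor
  · intro H
    constructor
    · refine eq_of_forall_trace_mul _ _ fun Y => ?_
      have h := H 0 Y
      rw [htr, trace_mul_kronSum, hks] at h
      simpa [ptrace1_one] using h
    · refine eq_of_forall_trace_mul _ _ fun X => ?_
      have h := H X 0
      rw [htr, trace_mul_kronSum, hks] at h
      simpa [ptrace2_one] using h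
  · rintro ⟨h1, h2⟩ X Y
    rw [htr, trace_mul_kronSum, hks, h1, h2, ptrace1_one, ptrace2_one]
end
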